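/- Let ρ be the standard product-null state on ℂ²⊗ℂ² determined by a 3×3 positive semidefinite block H with tr H > 0. If h_{02} = 0, then the partial transpose ρ^{Γ_B} is positive semidefinite. -/

import Mathlib

open Matrix ComplexOrder

/-- Index map identifying |00⟩ ↦ 0, |10⟩ ↦ 1, |11⟩ ↦ 2 (the value on |01⟩ is irrelevant). -/
def idx3 : Fin 2 × Fin 2 → Fin 3 := fun p =>
  if p = (0, 0) then 0 else if p = (1, 0) then 1 else 2

/-- The standard product-null state ρ = (1/tr H)·(H placed on span{|00⟩,|10⟩,|11⟩},
with zero |01⟩ row and column). -/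
noncomputable def stdState (H : Matrix (Fin 3) (Fin 3) ℂ) :
    Matrix (Fin 2 × Fin 2) (Fin 2 × Fin 2) ℂ :=
  Matrix.of fun p q =>
    if p = ((0 : Fin 2), (1 : Fin 2)) ∨ q = ((0 : Fin 2), (1 : Fin 2)) then 0
    else H (idx3 p) (idx3 q) / H.trace

/-- Partial transpose with respect to the second (Bob) factor. -/
def ptB (M : Matrix (Fin 2 × Fin 2) (Fin 2 × Fin 2) ℂ) :
    Matrix (Fin 2 × Fin 2) (Fin 2 × Fin 2) ℂ :=
  Matrix.of fun p q => M (p.1, q.2) (q.1, p.2)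

/-!
Partial transposition of ρ on Bob's factor moves h₀₂ to the |01⟩⟨10| entry, which lies outside
the support and vanishes because h₀₂ = 0, and otherwise only exchanges h₁₂ with h₂₁ = conj h₁₂.
Writing h₁₂ = |h₁₂| e^{iθ}, the resulting 3×3 block is D H D† with the unitary
D = diag(1, 1, e^{2iθ}), so ρ^{Γ_B} is again a standard product-null state of a positive
semidefinite block.
-/

open ComplexConjugate

lemma trace_diagonal_mul_mul_conjTranspose {n R : Type*} [Fintype n] [DecidableEq n]
    [CommRing R] [StarRing R] (A : Matrix n n R) {d : n → R} (hd : ∀ i, star (d i) * d i = 1) :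
    (diagonal d * A * (diagonal d)ᴴ).trace = A.trace := by
  rw [trace_mul_cycle, diagonal_conjTranspose, diagonal_mul_diagonal]
  simp [Pi.star_apply, hd]

lemma Complex.exists_norm_eq_one_mul_conj_eq_conj (z : ℂ) :
    ∃ u : ℂ, ‖u‖ = 1 ∧ z * conj u = conj z := by
  by_cases hz : z = 0
  · exact ⟨1, by simp, by simp [hz]⟩
  · refine ⟨z / conj z, by simp [hz], ?_⟩
    rw [map_div₀, Complex.conj_conj]
    field_simp

def stdEmbedding : Matrix (Fin 2 × Fin 2) (Fin 3) ℂ :=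
  of fun p i => if p ≠ (0, 1) ∧ idx3 p = i then 1 else 0

lemma stdState_eq_smul (H : Matrix (Fin 3) (Fin 3) ℂ) :
    stdState H = H.trace⁻¹ • (stdEmbedding * H * stdEmbeddingᴴ) := by
  ext p q
  fin_cases p <;> fin_cases q <;>
    simp [stdState, stdEmbedding, idx3, mul_apply, div_eq_inv_mul]

lemma stdState_posSemidef {H : Matrix (Fin 3) (Fin 3) ℂ} (hH : H.PosSemidef) :
    (stdState H).PosSemidef := by
  rw [stdState_eq_smul]
  exact (hH.mul_mul_conjTranspose_same _).smul (inv_nonneg_of_nonneg hH.trace_nonneg)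

lemma ptB_stdState_eq {H : Matrix (Fin 3) (Fin 3) ℂ} (hH : H.IsHermitian) (h02 : H 0 2 = 0)
    {u : ℂ} (hu : ‖u‖ = 1) (h12 : H 1 2 * conj u = conj (H 1 2)) :
    ptB (stdState H) = stdState (diagonal ![1, 1, u] * H * (diagonal ![1, 1, u])ᴴ) := by
  have hu' : u * conj u = 1 := by simp [Complex.mul_conj', hu]
  have htr := trace_diagonal_mul_mul_conjTranspose H (d := ![1, 1, u])
    (by intro i; fin_cases i <;> simp [mul_comm _ u, hu'])
  have h20 : H 2 0 = 0 := by rw [← hH.apply 2 0, h02, star_zero]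
  have h21 : H 2 1 = H 1 2 * conj u := by rw [← hH.apply 2 1, h12]; rfl
  unfold stdState
  rw [htr]
  ext p q
  fin_cases p <;> fin_cases q <;>
    simp [ptB, idx3, h02, h20, h21, mul_assoc, mul_left_comm u, hu']

theorem stmt11_general (H : Matrix (Fin 3) (Fin 3) ℂ) (hH : H.PosSemidef)
    (h02 : H 0 2 = 0) :
    (ptB (stdState H)).PosSemidef := by
  obtain ⟨u, hu, h12⟩ := Complex.exists_norm_eq_one_mul_conj_eq_conj (H 1 2)
  rw [ptB_stdState_eq hH.isHermitian h02 hu h12]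
  exact stdState_posSemidef (hH.mul_mul_conjTranspose_same _)

/-- If h₀₂ = 0, the partial transpose of the standard product-null state is
positive semidefinite. -/
theorem stmt11 (H : Matrix (Fin 3) (Fin 3) ℂ) (hH : H.PosSemidef)
    (htr : 0 < H.trace.re) (h02 : H 0 2 = 0) :
    (ptB (stdState H)).PosSemidef :=
  stmt11_general H hH h02
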